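/- arXiv:0912.0668 — 3 statements merged into one kernel-verified Lean document; each statement's English description precedes it below -/
import Mathlib

section
/- Let f, g ∈ PL₀(I) with fg = gf. If A is an orbital of f, then either A is disjoint from the support of g, or A is also an orbital of g. -/
/-!
A map that is affine near every point of an open interval has constant derivative there, so by
the mean value theorem its value at the midpoint is the mean of its end values; hence every
orbital of a PL map contains a breakpoint. A homeomorphism `g` commuting with `f` permutes the
orbitals of `f`. If `g` moved the left end `a` of an orbital `(a,b)` (say upwards), `g a` would
be a fixed point of `f`, so `g a ≥ b` and the translates `gⁿ(a,b)` would be infinitely many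
disjoint orbitals of `f`, each containing a breakpoint. So `g` fixes `a` and `b`. If `g` moves
some point of `(a,b)`, the orbital of `g` through it lies in `[a,b]`, its ends are fixed by `f`
by the same argument with the roles exchanged, and so it is `(a,b)`.
-/

/-- The support of a permutation `f` of `ℝ` : the set of points moved by `f`. -/
def Supp (f : Equiv.Perm ℝ) : Set ℝ := {x : ℝ | f x ≠ x}

/-- `IsPL0 f` says that `f` is (the extension by the identity on `ℝ \ [0,1]` of) a
piecewise-linear orientation-preserving homeomorphism of the unit interval `[0,1]`
with only finitely many breakpoints; this represents membership in `PL₀(I)`.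
The finite set `B` collects the possible points of non-differentiability: away from
`B` the map is locally affine. -/
def IsPL0 (f : Equiv.Perm ℝ) : Prop :=
  StrictMono ⇑f ∧ (∀ x : ℝ, x ≤ 0 → f x = x) ∧ (∀ x : ℝ, 1 ≤ x → f x = x) ∧
    ∃ B : Finset ℝ, ∀ x : ℝ, x ∉ B → ∃ s t : ℝ, ∀ᶠ y in nhds x, f y = s * y + t

/-- `IsOrbital f a b` : the open interval `(a,b)` is an orbital of `f`, i.e. a
connected component of `Supp f` (an open interval contained in the support whose
endpoints are fixed by `f`). -/
def IsOrbital (f : Equiv.Perm ℝ) (a b : ℝ) : Prop :=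
  a < b ∧ Set.Ioo a b ⊆ Supp f ∧ f a = a ∧ f b = b

open Set Filter Topology

def LocallyAffineOn (φ : ℝ → ℝ) (s : Set ℝ) : Prop :=
  ∀ x ∈ s, ∃ m c : ℝ, ∀ᶠ y in 𝓝 x, φ y = m * y + c

namespace LocallyAffineOn

variable {φ : ℝ → ℝ} {s : Set ℝ}

theorem mono {t : Set ℝ} (h : LocallyAffineOn φ s) (hts : t ⊆ s) : LocallyAffineOn φ t :=
  fun x hx => h x (hts hx)

theorem differentiableAt (h : LocallyAffineOn φ s) {x : ℝ} (hx : x ∈ s) :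
    DifferentiableAt ℝ φ x := by
  obtain ⟨m, c, hφ⟩ := h x hx
  exact ((hasDerivAt_id x).const_mul m |>.add_const c).differentiableAt.congr_of_eventuallyEq hφ

theorem eventuallyEq_deriv (h : LocallyAffineOn φ s) {x : ℝ} (hx : x ∈ s) :
    ∃ m : ℝ, deriv φ =ᶠ[𝓝 x] fun _ => m := by
  obtain ⟨m, c, hφ⟩ := h x hx
  refine ⟨m, (EventuallyEq.deriv (f := fun y => m * y + c) hφ).trans ?_⟩
  exact Eventually.of_forall fun y => by simp

theorem deriv_eq_of_isPreconnected (h : LocallyAffineOn φ s) (hs : IsOpen s)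
    (hs' : IsPreconnected s) {x y : ℝ} (hx : x ∈ s) (hy : y ∈ s) : deriv φ x = deriv φ y := by
  refine hs.is_const_of_deriv_eq_zero hs' (fun z hz => ?_) (fun z hz => ?_) hx hy
  · obtain ⟨m, hm⟩ := h.eventuallyEq_deriv hz
    exact ((differentiableAt_const m).congr_of_eventuallyEq hm).differentiableWithinAt
  · obtain ⟨m, hm⟩ := h.eventuallyEq_deriv hz
    simp [hm.deriv_eq]

theorem apply_midpoint {c d : ℝ} (hcd : c < d) (hcont : ContinuousOn φ (Icc c d))
    (h : LocallyAffineOn φ (Ioo c d)) : φ ((c + d) / 2) = (φ c + φ d) / 2 := by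
  set m := (c + d) / 2
  have hcm : c < m := by simp only [m]; linarith
  have hmd : m < d := by simp only [m]; linarith
  have hdiff : ∀ {u v}, c ≤ u → v ≤ d → DifferentiableOn ℝ φ (Ioo u v) := fun hu hv z hz =>
    (h.differentiableAt ⟨hu.trans_lt hz.1, hz.2.trans_le hv⟩).differentiableWithinAt
  obtain ⟨x, hx, hxφ⟩ := exists_deriv_eq_slope φ hcm (hcont.mono (Icc_subset_Icc le_rfl hmd.le))
    (hdiff le_rfl hmd.le)
  obtain ⟨y, hy, hyφ⟩ := exists_deriv_eq_slope φ hmd (hcont.mono (Icc_subset_Icc hcm.le le_rfl))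
    (hdiff hcm.le le_rfl)
  have hslope := h.deriv_eq_of_isPreconnected isOpen_Ioo isPreconnected_Ioo
    ⟨hx.1, hx.2.trans hmd⟩ ⟨hcm.trans hy.1, hy.2⟩
  rw [hxφ, hyφ, show d - m = m - c by simp only [m]; ring] at hslope
  field_simp [sub_ne_zero.2 hcm.ne'] at hslope
  linarith

end LocallyAffineOn

theorem IsPL0.continuous {f : Equiv.Perm ℝ} (hf : IsPL0 f) : Continuous f :=
  hf.1.monotone.continuous_of_surjective f.surjective

theorem strictMono_perm_inv {α : Type*} [LinearOrder α] {g : Equiv.Perm α} (hg : StrictMono g) :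
    StrictMono ⇑g⁻¹ :=
  fun x y hxy => hg.lt_iff_lt.1 (by simpa using hxy)

theorem Commute.perm_apply_apply {α : Type*} {f g : Equiv.Perm α} (h : Commute f g) (x : α) :
    f (g x) = g (f x) :=
  DFunLike.congr_fun h.eq x

namespace IsOrbital

variable {f g : Equiv.Perm ℝ} {a b : ℝ}

theorem right_unique {b' : ℝ} (h : IsOrbital f a b) (h' : IsOrbital f a b') : b = b' := by
  by_contra hne
  rcases lt_or_gt_of_ne hne with hlt | hlt
  · exact h'.2.1 ⟨h.1, hlt⟩ h.2.2.2
  · exact h.2.1 ⟨h'.1, hlt⟩ h'.2.2.2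

theorem exists_mem_of_locallyAffineOn_compl {B : Finset ℝ} (h : IsOrbital f a b)
    (hcont : Continuous f) (hB : LocallyAffineOn f (↑B)ᶜ) : ∃ β ∈ B, β ∈ Ioo a b := by
  by_contra! hB'
  have hmid := (hB.mono fun x hx hxB => hB' x hxB hx).apply_midpoint h.1 hcont.continuousOn
  rw [h.2.2.1, h.2.2.2] at hmid
  exact h.2.1 ⟨by linarith [h.1], by linarith [h.1]⟩ hmid

theorem map_of_commute (h : IsOrbital f a b) (hg : StrictMono g) (hcomm : Commute f g) :
    IsOrbital f (g a) (g b) := by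
  refine ⟨hg h.1, ?_, by rw [hcomm.perm_apply_apply, h.2.2.1],
    by rw [hcomm.perm_apply_apply, h.2.2.2]⟩
  rintro x ⟨hax, hxb⟩ hfx
  obtain ⟨y, rfl⟩ := g.surjective x
  refine h.2.1 ⟨hg.lt_iff_lt.1 hax, hg.lt_iff_lt.1 hxb⟩ (g.injective ?_)
  rwa [← hcomm.perm_apply_apply]

theorem iterate_map_of_commute (h : IsOrbital f a b) (hg : StrictMono g) (hcomm : Commute f g)
    (n : ℕ) : IsOrbital f (g^[n] a) (g^[n] b) := by
  induction n with
  | zero => exact h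
  | succ n ih =>
    rw [Function.iterate_succ_apply', Function.iterate_succ_apply']
    exact ih.map_of_commute hg hcomm

theorem apply_left_lt_right_of_commute (h : IsOrbital f a b) (hf : IsPL0 f) (hg : StrictMono g)
    (hcomm : Commute f g) : g a < b := by
  by_contra! hba
  have hcont := hf.continuous
  obtain ⟨-, -, -, B, hB⟩ := hf
  choose β hβB hβ using fun n =>
    (h.iterate_map_of_commute hg hcomm n).exists_mem_of_locallyAffineOn_compl hcont hB
  have hβmono : StrictMono β := strictMono_nat_of_lt_succ fun n =>
    calc β n < g^[n] b := (hβ n).2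
      _ ≤ g^[n] (g a) := hg.monotone.iterate n hba
      _ = g^[n + 1] a := (Function.iterate_succ_apply _ _ _).symm
      _ < β (n + 1) := (hβ (n + 1)).1
  exact infinite_range_of_injective hβmono.injective
    (B.finite_toSet.subset (range_subset_iff.2 hβB))

theorem apply_left_le_of_commute (h : IsOrbital f a b) (hf : IsPL0 f) (hg : StrictMono g)
    (hcomm : Commute f g) : g a ≤ a := by
  by_contra! hag
  have hfix : f (g a) = g a := by rw [hcomm.perm_apply_apply, h.2.2.1]
  exact h.2.1 ⟨hag, h.apply_left_lt_right_of_commute hf hg hcomm⟩ hfix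

theorem apply_eq_of_commute (h : IsOrbital f a b) (hf : IsPL0 f) (hg : StrictMono g)
    (hcomm : Commute f g) : g a = a ∧ g b = b := by
  have hga : g a = a := by
    refine le_antisymm (h.apply_left_le_of_commute hf hg hcomm) ?_
    have := hg.monotone (h.apply_left_le_of_commute hf (strictMono_perm_inv hg) hcomm.inv_right)
    simpa using this
  have hgb := h.map_of_commute hg hcomm
  rw [hga] at hgb
  exact ⟨hga, (h.right_unique hgb).symm⟩

end IsOrbital

theorem exists_isOrbital_mem_Ioo {g : Equiv.Perm ℝ} (hg : Continuous g) {a b x : ℝ}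
    (ha : g a = a) (hb : g b = b) (hx : x ∈ Ioo a b) (hgx : g x ≠ x) :
    ∃ c d, a ≤ c ∧ d ≤ b ∧ x ∈ Ioo c d ∧ IsOrbital g c d := by
  have hfix : IsClosed {y | g y = y} := isClosed_eq hg continuous_id
  obtain ⟨c, ⟨⟨hac, hcx⟩, hgc⟩, hcmax⟩ :=
    (isCompact_Icc.inter_right hfix).exists_isGreatest ⟨a, ⟨le_rfl, hx.1.le⟩, ha⟩
  obtain ⟨d, ⟨⟨hxd, hdb⟩, hgd⟩, hdmin⟩ :=
    (isCompact_Icc.inter_right hfix).exists_isLeast ⟨b, ⟨hx.2.le, le_rfl⟩, hb⟩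
  have hcx' : c < x := hcx.lt_of_ne fun hc => hgx (hc ▸ hgc)
  have hxd' : x < d := hxd.lt_of_ne fun hd => hgx (hd ▸ hgd)
  refine ⟨c, d, hac, hdb, ⟨hcx', hxd'⟩, hcx'.trans hxd', ?_, hgc, hgd⟩
  rintro y ⟨hcy, hyd⟩ hgy
  rcases le_total y x with hyx | hxy
  · exact (hcmax ⟨⟨hac.trans hcy.le, hyx⟩, hgy⟩).not_gt hcy
  · exact (hdmin ⟨⟨hxy, hyd.le.trans hdb⟩, hgy⟩).not_gt hyd

/-- If `f, g ∈ PL₀(I)` commute and `A` is an orbital of `f`, then either `A` is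
disjoint from the support of `g`, or `A` is also an orbital of `g`. -/
theorem commute_orbital_disjoint_or_eq (f g : Equiv.Perm ℝ)
    (hf : IsPL0 f) (hg : IsPL0 g) (hcomm : f * g = g * f) (a b : ℝ)
    (horb : IsOrbital f a b) :
    Disjoint (Set.Ioo a b) (Supp g) ∨ IsOrbital g a b := by
  obtain ⟨hga, hgb⟩ := horb.apply_eq_of_commute hf hg.1 hcomm
  by_cases hfixed : ∀ x ∈ Ioo a b, g x = x
  · exact Or.inl (disjoint_left.2 fun x hx hgx => hgx (hfixed x hx))
  obtain ⟨x, hx, hgx⟩ := not_forall₂.1 hfixed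
  obtain ⟨c, d, hac, hdb, hxcd, horbg⟩ := exists_isOrbital_mem_Ioo hg.continuous hga hgb hx hgx
  obtain ⟨hfc, hfd⟩ := horbg.apply_eq_of_commute hg hf.1 (Commute.symm hcomm)
  have hc : c = a := hac.eq_of_not_lt' fun hac' => horb.2.1 ⟨hac', hxcd.1.trans hx.2⟩ hfc
  have hd : d = b := hdb.eq_of_not_lt fun hdb' => horb.2.1 ⟨hx.1.trans hxcd.2, hdb'⟩ hfd
  subst hc hd
  exact Or.inr horbg
end

section
/- Let f₀, f₁ ∈ PL₀(I) satisfy the relations [f₀f₁⁻¹, f₀⁻¹f₁f₀] = 1 and [f₀f₁⁻¹, f₀⁻²f₁f₀²] = 1. If A is an orbital of f₀ and B is an orbital of f₁ with A ∩ B ≠ ∅, then A ⊆ B or B ⊆ A. -/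
open scoped commutatorElement

/-- The two defining relations `[f₀f₁⁻¹, f₁^{f₀}] = 1` and `[f₀f₁⁻¹, f₁^{f₀²}] = 1`
of Thompson's group `F`, for the pair `(f₀, f₁)`.  The paper composes in word order
(functions act on the right), so the paper's word `f₀f₁⁻¹` is the group element
`f₁⁻¹ * f₀` in Mathlib's left-action convention, and the conjugate
`f₁^{f₀} = f₀⁻¹f₁f₀` is the element `f₀ * f₁ * f₀⁻¹`.  Recall `⁅a,b⁆ = 1 ↔ a*b = b*a`. -/
def ThompsonRel (f₀ f₁ : Equiv.Perm ℝ) : Prop :=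
  ⁅f₁⁻¹ * f₀, f₀ * f₁ * f₀⁻¹⁆ = 1 ∧ ⁅f₁⁻¹ * f₀, f₀ ^ 2 * f₁ * (f₀ ^ 2)⁻¹⁆ = 1

/-! Write `g = f₁⁻¹ f₀` and `Kₙ = f₀ⁿ f₁ f₀⁻ⁿ`; the relations say that `g` commutes with `K₁`
and `K₂`. In `PL₀(I)`, a map `v` commuting with `u` fixes the endpoints of every orbital of `u`:
otherwise the iterates of `v` (or `v⁻¹`) push an endpoint monotonically towards a point `L`, all
of them fixed by `u`, and `u`, being affine just to the left of `L`, must be the identity between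
two consecutive ones; but `v`-iterates of points of the orbital lie there too.

If the orbitals cross, say `a < b < c < d`, let `(p, q)` be the orbital of `g` containing `c`.
As `g` fixes the endpoint `f₀ⁿ b` of the `Kₙ`-orbital `(f₀ⁿ b, f₀ⁿ d)`, we get `f₀ⁿ b ≤ p`; as
`Kₙ` fixes `p`, `f₁` fixes `f₀⁻ⁿ p`, so `f₀⁻ⁿ p ≤ b`. Thus `f₀⁻¹ p = b = f₀⁻² p` and `f₀` fixes
`b ∈ (a, c)`. The case `b < a < d < c` is symmetric. -/

open Set Filter Topology

theorem Equiv.Perm.apply_comm_of_commute {α : Type*} {u v : Equiv.Perm α} (h : Commute u v)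
    (x : α) : u (v x) = v (u x) :=
  congrArg (· x) h.eq

theorem Equiv.Perm.conj_apply_eq_self_iff {α : Type*} {k f : Equiv.Perm α} {x : α} :
    (k * f * k⁻¹) x = x ↔ f (k⁻¹ x) = k⁻¹ x := by
  rw [Equiv.Perm.mul_apply, Equiv.Perm.mul_apply, Equiv.Perm.eq_inv_iff_eq]

theorem Equiv.Perm.apply_eq_self_of_inv_eq_of_inv_sq_eq {α : Type*} {k : Equiv.Perm α}
    {p x : α} (h₁ : k⁻¹ p = x) (h₂ : (k ^ 2)⁻¹ p = x) : k x = x :=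
  calc k x = k ((k ^ 2)⁻¹ p) := by rw [h₂]
    _ = k⁻¹ p := by simp [sq, Equiv.Perm.mul_apply]
    _ = x := h₁

theorem IsOrbital.conj {f k : Equiv.Perm ℝ} {α β : ℝ} (ho : IsOrbital f α β) (hk : StrictMono k) :
    IsOrbital (k * f * k⁻¹) (k α) (k β) := by
  obtain ⟨hαβ, hsupp, hα, hβ⟩ := ho
  refine ⟨hk hαβ, fun x hx hfix => ?_, by simp [hα], by simp [hβ]⟩
  have hx' : k⁻¹ x ∈ Ioo α β := by
    constructor <;> rw [← hk.lt_iff_lt] <;> simp [hx.1, hx.2]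
  exact hsupp hx' (k.injective (by simpa using hfix))

theorem exists_affine_on_of_locally_affine {f : ℝ → ℝ} {U : Set ℝ} (hU : IsPreconnected U)
    {x₀ : ℝ} (hx₀ : x₀ ∈ U) (hf : ∀ x ∈ U, ∃ s t : ℝ, ∀ᶠ y in 𝓝 x, f y = s * y + t) :
    ∃ s t : ℝ, ∀ y ∈ U, f y = s * y + t := by
  have affine_analytic (s t x : ℝ) : AnalyticAt ℝ (fun y => s * y + t) x := by fun_prop
  obtain ⟨s, t, hst⟩ := hf x₀ hx₀
  refine ⟨s, t, AnalyticOnNhd.eqOn_of_preconnected_of_eventuallyEq (fun x hx => ?_)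
    (fun x _ => affine_analytic s t x) hU hx₀ hst⟩
  obtain ⟨s', t', h'⟩ := hf x hx
  exact (affine_analytic s' t' x).congr (h'.mono fun y hy => hy.symm)

namespace IsPL0

variable {f g : Equiv.Perm ℝ}

theorem continuous_s10 (hf : IsPL0 f) : Continuous f :=
  hf.1.monotone.continuous_of_surjective f.surjective

theorem inv (hf : IsPL0 f) : IsPL0 f⁻¹ := by
  obtain ⟨hmono, h0, h1, B, hB⟩ := hf
  have hmono' : StrictMono ⇑(f⁻¹) := fun x y hxy => hmono.lt_iff_lt.1 (by simpa using hxy)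
  refine ⟨hmono', fun x hx => ?_, fun x hx => ?_, B.image f, fun x hx => ?_⟩
  · rw [Equiv.Perm.inv_eq_iff_eq, h0 x hx]
  · rw [Equiv.Perm.inv_eq_iff_eq, h1 x hx]
  have hz : f⁻¹ x ∉ B := fun h => hx (Finset.mem_image.2 ⟨_, h, by simp⟩)
  obtain ⟨s, t, hst⟩ := hB _ hz
  have hs : s ≠ 0 := by
    rintro rfl
    obtain ⟨y, hy, hne⟩ := ((hst.filter_mono nhdsWithin_le_nhds).and
      (self_mem_nhdsWithin : {f⁻¹ x}ᶜ ∈ 𝓝[≠] (f⁻¹ x))).exists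
    exact hne (f.injective (by rw [hy, hst.self_of_nhds]; ring))
  refine ⟨s⁻¹, -t / s, ?_⟩
  have hcont : Continuous ⇑(f⁻¹) := hmono'.monotone.continuous_of_surjective f⁻¹.surjective
  filter_upwards [(hcont.tendsto x).eventually hst] with y hy
  have hy' : y = s * f⁻¹ y + t := by simpa using hy
  field_simp
  linarith

theorem mul (hf : IsPL0 f) (hg : IsPL0 g) : IsPL0 (f * g) := by
  have hgc := hg.continuous_s10
  obtain ⟨hfm, hf0, hf1, Bf, hBf⟩ := hf
  obtain ⟨hgm, hg0, hg1, Bg, hBg⟩ := hg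
  refine ⟨hfm.comp hgm, fun x hx => ?_, fun x hx => ?_, Bg ∪ Bf.image ⇑(g⁻¹), fun x hx => ?_⟩
  · simp [hg0 x hx, hf0 x hx]
  · simp [hg1 x hx, hf1 x hx]
  rw [Finset.mem_union, not_or] at hx
  obtain ⟨s, t, hst⟩ := hBg x hx.1
  obtain ⟨s', t', hst'⟩ := hBf (g x) fun h => hx.2 (Finset.mem_image.2 ⟨_, h, by simp⟩)
  refine ⟨s' * s, s' * t + t', ?_⟩
  filter_upwards [(hgc.tendsto x).eventually hst', hst] with y h1 h2
  rw [Equiv.Perm.mul_apply, h1, h2]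
  ring

end IsPL0

def PL0 : Subgroup (Equiv.Perm ℝ) where
  carrier := {f | IsPL0 f}
  one_mem' := ⟨strictMono_id, fun _ _ => rfl, fun _ _ => rfl, ∅, fun _ _ =>
    ⟨1, 0, Eventually.of_forall fun y => by simp⟩⟩
  mul_mem' := IsPL0.mul
  inv_mem' := IsPL0.inv

namespace IsPL0

variable {f k u v w : Equiv.Perm ℝ}

theorem pow (hf : IsPL0 f) (n : ℕ) : IsPL0 (f ^ n) :=
  PL0.pow_mem hf n

theorem conj (hk : IsPL0 k) (hf : IsPL0 f) : IsPL0 (k * f * k⁻¹) :=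
  (hk.mul hf).mul hk.inv

theorem exists_affine_on_Ioo_left (hf : IsPL0 f) (L : ℝ) :
    ∃ ε > 0, ∃ s t : ℝ, ∀ y ∈ Ioo (L - ε) L, f y = s * y + t := by
  obtain ⟨B, hB⟩ := hf.2.2.2
  have hnhds : ((B.erase L : Finset ℝ) : Set ℝ)ᶜ ∈ 𝓝 L :=
    (B.erase L).isClosed.isOpen_compl.mem_nhds (by simp)
  obtain ⟨ε, hε, hball⟩ := Metric.mem_nhds_iff.1 hnhds
  have hfree : ∀ y ∈ Ioo (L - ε) L, y ∉ B := fun y hy hyB => by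
    refine hball ?_ (Finset.mem_erase.2 ⟨hy.2.ne, hyB⟩)
    rw [Metric.mem_ball, Real.dist_eq, abs_lt]
    constructor <;> linarith [hy.1, hy.2]
  exact ⟨ε, hε, exists_affine_on_of_locally_affine isPreconnected_Ioo
    (x₀ := L - ε / 2) ⟨by linarith, by linarith⟩ fun y hy => hB y (hfree y hy)⟩

theorem apply_eq_self_of_commute_of_lt (hu : IsPL0 u) (hw : IsPL0 w) (hc : Commute u w)
    {x : ℝ} (hux : u x = x) (hxw : x < w x) : ∀ y ∈ Ioo x (w x), u y = y := by
  set a : ℕ → ℝ := fun n => (w ^ n) x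
  have ha : StrictMono a := hw.1.strictMono_iterate_of_lt_map hxw
  have hfix (n : ℕ) : u (a n) = a n := by
    simp only [a, Equiv.Perm.apply_comm_of_commute (hc.pow_right n), hux]
  have hx1 : x ≤ 1 := le_of_not_gt fun h => hxw.ne' (hw.2.2.1 x h.le)
  have hbdd : BddAbove (range a) := ⟨1, by
    rintro _ ⟨n, rfl⟩
    calc a n ≤ (w ^ n) 1 := (hw.1.iterate n).monotone hx1
      _ = 1 := Function.iterate_fixed (hw.2.2.1 1 le_rfl) n⟩
  set L := ⨆ n, a n
  have haL (n : ℕ) : a n < L := (ha n.lt_succ_self).trans_le (le_ciSup hbdd _)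
  obtain ⟨ε, hε, s, t, hst⟩ := hu.exists_affine_on_Ioo_left L
  obtain ⟨M, hM⟩ := exists_lt_of_lt_ciSup (show L - ε < L by linarith)
  have hmem (n : ℕ) (hn : M ≤ n) : a n ∈ Ioo (L - ε) L :=
    ⟨hM.trans_le (ha.monotone hn), haL n⟩
  have e₀ : s * a M + t = a M := (hst _ (hmem M le_rfl)).symm.trans (hfix M)
  have e₁ : s * a (M + 1) + t = a (M + 1) := (hst _ (hmem _ M.le_succ)).symm.trans (hfix _)
  have hs : s = 1 := by
    have : (s - 1) * (a (M + 1) - a M) = 0 := by linear_combination e₁ - e₀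
    rcases mul_eq_zero.1 this with h | h
    · linarith
    · exact absurd h (sub_ne_zero.2 (ha M.lt_succ_self).ne')
  intro y hy
  have hwy : (w ^ M) y ∈ Ioo (a M) (a (M + 1)) := by
    have hM1 : a (M + 1) = (w ^ M) (w x) := by simp only [a, pow_succ, Equiv.Perm.mul_apply]
    rw [hM1]
    exact ⟨(hw.1.iterate M) hy.1, (hw.1.iterate M) hy.2⟩
  have hu_wy : u ((w ^ M) y) = (w ^ M) y := by
    rw [hst _ ⟨(hmem M le_rfl).1.trans hwy.1, hwy.2.trans (haL _)⟩, hs]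
    linear_combination e₀ - hs * a M
  rw [Equiv.Perm.apply_comm_of_commute (hc.pow_right M)] at hu_wy
  exact (w ^ M).injective hu_wy

theorem eventually_apply_eq_self_of_commute (hu : IsPL0 u) (hv : IsPL0 v) (hc : Commute u v)
    {x : ℝ} (hux : u x = x) (hvx : v x ≠ x) : ∀ᶠ y in 𝓝 x, u y = y := by
  have key (w : Equiv.Perm ℝ) (hw : IsPL0 w) (hcw : Commute u w) (hxw : x < w x) :
      ∀ᶠ y in 𝓝 x, u y = y := by
    have hw' : w⁻¹ x < w (w⁻¹ x) := by simpa using (hw.inv.1 hxw)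
    have hux' : u (w⁻¹ x) = w⁻¹ x := by rw [Equiv.Perm.apply_comm_of_commute hcw.inv_right, hux]
    filter_upwards [Ioo_mem_nhds (by simpa using hw') hxw] with y hy
    rcases lt_trichotomy y x with h | rfl | h
    · exact hu.apply_eq_self_of_commute_of_lt hw hcw hux' hw' y ⟨hy.1, by simpa using h⟩
    · exact hux
    · exact hu.apply_eq_self_of_commute_of_lt hw hcw hux hxw y ⟨h, hy.2⟩
  rcases hvx.lt_or_gt with h | h
  · exact key v⁻¹ hv.inv hc.inv_right (by simpa using hv.inv.1 h)
  · exact key v hv hc h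

theorem exists_orbital_mem (hf : IsPL0 f) {x : ℝ} (hx : f x ≠ x) :
    ∃ p q, IsOrbital f p q ∧ x ∈ Ioo p q := by
  set F := {y | f y = y}
  have hF : IsClosed F := isClosed_eq hf.continuous_s10 continuous_id
  have hbelow : BddAbove (F ∩ Iic x) := ⟨x, fun _ hy => hy.2⟩
  have habove : BddBelow (F ∩ Ici x) := ⟨x, fun _ hy => hy.2⟩
  have hp := (hF.inter isClosed_Iic).csSup_mem
    ⟨0, hf.2.1 0 le_rfl, le_of_not_gt fun h => hx (hf.2.1 x h.le)⟩ hbelow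
  have hq := (hF.inter isClosed_Ici).csInf_mem
    ⟨1, hf.2.2.1 1 le_rfl, le_of_not_gt fun h => hx (hf.2.2.1 x h.le)⟩ habove
  have hpx : sSup (F ∩ Iic x) < x := hp.2.lt_of_ne fun h => hx (h ▸ hp.1)
  have hxq : x < sInf (F ∩ Ici x) := hq.2.lt_of_ne' fun h => hx (h ▸ hq.1)
  refine ⟨_, _, ⟨hpx.trans hxq, fun y hy hfy => ?_, hp.1, hq.1⟩, hpx, hxq⟩
  rcases le_total y x with h | h
  · exact (le_csSup hbelow ⟨hfy, h⟩).not_gt hy.1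
  · exact (csInf_le habove ⟨hfy, h⟩).not_gt hy.2

end IsPL0

theorem IsOrbital.apply_endpoints_of_commute {u v : Equiv.Perm ℝ} {α β : ℝ}
    (ho : IsOrbital u α β) (hu : IsPL0 u) (hv : IsPL0 v) (hc : Commute u v) :
    v α = α ∧ v β = β := by
  obtain ⟨hαβ, hsupp, hα, hβ⟩ := ho
  constructor
  · by_contra hvα
    obtain ⟨y, hy, hyI⟩ := ((hu.eventually_apply_eq_self_of_commute hv hc hα hvα).filter_mono
      nhdsWithin_le_nhds |>.and (Ioo_mem_nhdsGT hαβ)).exists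
    exact hsupp hyI hy
  · by_contra hvβ
    obtain ⟨y, hy, hyI⟩ := ((hu.eventually_apply_eq_self_of_commute hv hc hβ hvβ).filter_mono
      nhdsWithin_le_nhds |>.and (Ioo_mem_nhdsLT hαβ)).exists
    exact hsupp hyI hy

namespace ThompsonRel

variable {f₀ f₁ : Equiv.Perm ℝ} {n : ℕ}

theorem commute_conj (hrel : ThompsonRel f₀ f₁) (hn : n = 1 ∨ n = 2) :
    Commute (f₁⁻¹ * f₀) (f₀ ^ n * f₁ * (f₀ ^ n)⁻¹) := by
  rcases hn with rfl | rfl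
  · simpa using commutatorElement_eq_one_iff_commute.1 hrel.1
  · exact commutatorElement_eq_one_iff_commute.1 hrel.2

theorem apply_pow_endpoints_of_isOrbital (hrel : ThompsonRel f₀ f₁) (h₀ : IsPL0 f₀)
    (h₁ : IsPL0 f₁) (hn : n = 1 ∨ n = 2) {b d : ℝ} (ho₁ : IsOrbital f₁ b d) :
    (f₁⁻¹ * f₀) ((f₀ ^ n) b) = (f₀ ^ n) b ∧ (f₁⁻¹ * f₀) ((f₀ ^ n) d) = (f₀ ^ n) d :=
  (ho₁.conj (h₀.pow n).1).apply_endpoints_of_commute ((h₀.pow n).conj h₁) (h₁.inv.mul h₀)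
    (hrel.commute_conj hn).symm

theorem apply_inv_pow_endpoints_of_isOrbital (hrel : ThompsonRel f₀ f₁) (h₀ : IsPL0 f₀)
    (h₁ : IsPL0 f₁) (hn : n = 1 ∨ n = 2) {p q : ℝ} (hoG : IsOrbital (f₁⁻¹ * f₀) p q) :
    f₁ ((f₀ ^ n)⁻¹ p) = (f₀ ^ n)⁻¹ p ∧ f₁ ((f₀ ^ n)⁻¹ q) = (f₀ ^ n)⁻¹ q := by
  simpa only [Equiv.Perm.conj_apply_eq_self_iff] using hoG.apply_endpoints_of_commute
    (h₁.inv.mul h₀) ((h₀.pow n).conj h₁) (hrel.commute_conj hn)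

theorem false_of_orbitals_cross_right (hrel : ThompsonRel f₀ f₁) (h₀ : IsPL0 f₀)
    (h₁ : IsPL0 f₁) {a b c d : ℝ} (ho₀ : IsOrbital f₀ a c) (ho₁ : IsOrbital f₁ b d)
    (hb : b ∈ Ioo a c) (hc : c ∈ Ioo b d) : False := by
  have hGc : (f₁⁻¹ * f₀) c ≠ c := by
    rw [Equiv.Perm.mul_apply, ho₀.2.2.2, Ne, Equiv.Perm.inv_eq_iff_eq]
    exact fun h => ho₁.2.1 hc h.symm
  obtain ⟨p, q, hoG, hpc, hcq⟩ := (h₁.inv.mul h₀).exists_orbital_mem hGc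
  have pinned (n : ℕ) (hn : n = 1 ∨ n = 2) : (f₀ ^ n)⁻¹ p = b := by
    have hmono : StrictMono (f₀ ^ n) := (h₀.pow n).1
    have hfc : (f₀ ^ n) c = c := Function.iterate_fixed ho₀.2.2.2 n
    apply le_antisymm
    · refine le_of_not_gt fun hlt => ho₁.2.1 ⟨hlt, ?_⟩
        (hrel.apply_inv_pow_endpoints_of_isOrbital h₀ h₁ hn hoG).1
      refine lt_trans ?_ hc.2
      rw [← hmono.lt_iff_lt]
      simpa [hfc] using hpc
    · have hbp : (f₀ ^ n) b ≤ p := le_of_not_gt fun hlt => hoG.2.1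
        ⟨hlt, (hfc ▸ hmono hb.2).trans hcq⟩ (hrel.apply_pow_endpoints_of_isOrbital h₀ h₁ hn ho₁).1
      rw [← hmono.le_iff_le]
      simpa using hbp
  exact ho₀.2.1 hb (Equiv.Perm.apply_eq_self_of_inv_eq_of_inv_sq_eq
    (by simpa using pinned 1 (.inl rfl)) (pinned 2 (.inr rfl)))

theorem false_of_orbitals_cross_left (hrel : ThompsonRel f₀ f₁) (h₀ : IsPL0 f₀)
    (h₁ : IsPL0 f₁) {a b c d : ℝ} (ho₀ : IsOrbital f₀ a c) (ho₁ : IsOrbital f₁ b d)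
    (ha : a ∈ Ioo b d) (hd : d ∈ Ioo a c) : False := by
  have hGa : (f₁⁻¹ * f₀) a ≠ a := by
    rw [Equiv.Perm.mul_apply, ho₀.2.2.1, Ne, Equiv.Perm.inv_eq_iff_eq]
    exact fun h => ho₁.2.1 ha h.symm
  obtain ⟨p, q, hoG, hpa, haq⟩ := (h₁.inv.mul h₀).exists_orbital_mem hGa
  have pinned (n : ℕ) (hn : n = 1 ∨ n = 2) : (f₀ ^ n)⁻¹ q = d := by
    have hmono : StrictMono (f₀ ^ n) := (h₀.pow n).1
    have hfa : (f₀ ^ n) a = a := Function.iterate_fixed ho₀.2.2.1 n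
    apply le_antisymm
    · have hqd : q ≤ (f₀ ^ n) d := le_of_not_gt fun hlt => hoG.2.1
        ⟨hpa.trans (hfa ▸ hmono hd.1), hlt⟩ (hrel.apply_pow_endpoints_of_isOrbital h₀ h₁ hn ho₁).2
      rw [← hmono.le_iff_le]
      simpa using hqd
    · refine le_of_not_gt fun hlt => ho₁.2.1 ⟨?_, hlt⟩
        (hrel.apply_inv_pow_endpoints_of_isOrbital h₀ h₁ hn hoG).2
      refine ha.1.trans ?_
      rw [← hmono.lt_iff_lt]
      simpa [hfa] using haq
  exact ho₀.2.1 hd (Equiv.Perm.apply_eq_self_of_inv_eq_of_inv_sq_eq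
    (by simpa using pinned 1 (.inl rfl)) (pinned 2 (.inr rfl)))

end ThompsonRel

/-- If `f₀, f₁ ∈ PL₀(I)` satisfy the two standard relations of Thompson's group `F`,
`A` is an orbital of `f₀`, `B` is an orbital of `f₁` and `A ∩ B ≠ ∅`, then
`A ⊆ B` or `B ⊆ A`. -/
theorem orbitals_nested (f₀ f₁ : Equiv.Perm ℝ)
    (h₀ : IsPL0 f₀) (h₁ : IsPL0 f₁) (hrel : ThompsonRel f₀ f₁) (a c b d : ℝ)
    (horb₀ : IsOrbital f₀ a c) (horb₁ : IsOrbital f₁ b d)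
    (hmeet : (Set.Ioo a c ∩ Set.Ioo b d).Nonempty) :
    Set.Ioo a c ⊆ Set.Ioo b d ∨ Set.Ioo b d ⊆ Set.Ioo a c := by
  obtain ⟨x, hxA, hxB⟩ := hmeet
  by_contra hcon
  rw [not_or] at hcon
  have hAB : a < b ∨ d < c := by
    by_contra! h
    exact hcon.1 (Ioo_subset_Ioo h.1 h.2)
  have hBA : b < a ∨ c < d := by
    by_contra! h
    exact hcon.2 (Ioo_subset_Ioo h.1 h.2)
  rcases hAB with hab | hdc
  · exact hrel.false_of_orbitals_cross_right h₀ h₁ horb₀ horb₁ ⟨hab, hxB.1.trans hxA.2⟩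
      ⟨hxB.1.trans hxA.2, hBA.resolve_left hab.not_gt⟩
  · exact hrel.false_of_orbitals_cross_left h₀ h₁ horb₀ horb₁
      ⟨hBA.resolve_right hdc.not_gt, hxA.1.trans hxB.2⟩ ⟨hxA.1.trans hxB.2, hdc⟩
end

section
/- Let f₀, f₁ ∈ PL₀(I) satisfy the relations [f₀f₁⁻¹, f₀⁻¹f₁f₀] = 1 and [f₀f₁⁻¹, f₀⁻²f₁f₀²] = 1. Let (a,c) be an orbital of f₀ on which f₀(x) > x and not an orbital of f₁, and let (b₁,d₁) < ... < (bₙ,dₙ) be the orbitals of f₁ contained in (a,c). Then f₀(b₁) > bₙ. -/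
open scoped commutatorElement

/-!
Write `y = f₁⁻¹ f₀` and `X k = f₀ᵏ f₁ f₀⁻ᵏ`. The relations say that `y` commutes with `X 1` and
`X 2`, hence with every `X k`, `k ≥ 1`, and then `f₁ (X k) f₁⁻¹ = X (k + 1)`.

The key rigidity fact: if a PL map commutes with `v`, it fixes either all or none of the points of
an orbital of `v`, for otherwise iterating `v` makes its fixed and its moved points accumulate at an
endpoint, which a locally affine map cannot do. With it, no orbital of `f₁` can start at or left
of `a` and end inside `(a,c)`; hence `f₁` is the identity just right of `a`, and fixes `a` and `c`.
Now `y` commutes with `X k` and fixes `a` and `c`, so it permutes the orbitals of `X k` inside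
`(a,c)` in an order-preserving way and fixes the leftmost endpoint `f₀ᵏ b₀`. Thus `f₁` maps
`f₀ᵏ b₀` to `f₀ᵏ⁺¹ b₀` for `k ≥ 1`; these points increase to `c`, so the fixed point `bₙ` of `f₁`
cannot lie above `f₀ b₀`.
-/

open Set Filter Topology

section Iterate

variable {α : Type*} [ConditionallyCompleteLinearOrder α] [TopologicalSpace α] [OrderTopology α]
  {f : α → α} {p q x : α}

theorem tendsto_iterate_nhdsGT (hf : StrictMono f) (hc : Continuous f) (hp : f p = p)
    (hdown : ∀ y ∈ Ioo p q, f y < y) (hx : x ∈ Ioo p q) :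
    Tendsto (fun k => f^[k] x) atTop (𝓝[>] p) := by
  have hmem : ∀ k, f^[k] x ∈ Ioc p x := by
    intro k
    induction k with
    | zero => exact ⟨hx.1, le_rfl⟩
    | succ k ih =>
      rw [Function.iterate_succ_apply']
      exact ⟨hp ▸ hf ih.1, (hdown _ ⟨ih.1, ih.2.trans_lt hx.2⟩).le.trans ih.2⟩
  have hanti : Antitone fun k => f^[k] x := antitone_nat_of_succ_le fun k => by
    rw [Function.iterate_succ_apply']
    exact (hdown _ ⟨(hmem k).1, (hmem k).2.trans_lt hx.2⟩).le
  have hbdd : BddBelow (range fun k => f^[k] x) := ⟨p, by rintro _ ⟨k, rfl⟩; exact (hmem k).1.le⟩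
  have hlim := tendsto_atTop_ciInf hanti hbdd
  have hfix : f (⨅ k, f^[k] x) = ⨅ k, f^[k] x := isFixedPt_of_tendsto_iterate hlim hc.continuousAt
  have hinf : ⨅ k, f^[k] x = p := by
    refine le_antisymm (not_lt.1 fun hlt => ?_) (le_ciInf fun k => (hmem k).1.le)
    exact (hdown _ ⟨hlt, (ciInf_le hbdd 0).trans_lt hx.2⟩).ne hfix
  rw [hinf] at hlim
  exact tendsto_nhdsWithin_iff.2 ⟨hlim, Eventually.of_forall fun k => (hmem k).1⟩

theorem tendsto_iterate_nhdsLT (hf : StrictMono f) (hc : Continuous f) (hq : f q = q)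
    (hup : ∀ y ∈ Ioo p q, y < f y) (hx : x ∈ Ioo p q) :
    Tendsto (fun k => f^[k] x) atTop (𝓝[<] q) :=
  tendsto_iterate_nhdsGT (α := αᵒᵈ) hf.dual hc hq (fun y hy => hup y ⟨hy.2, hy.1⟩) ⟨hx.2, hx.1⟩

end Iterate

def strictMonoPerms (α : Type*) [LinearOrder α] : Subgroup (Equiv.Perm α) where
  carrier := {f | StrictMono f}
  mul_mem' hf hg := hf.comp hg
  one_mem' := strictMono_id
  inv_mem' {f} hf x y hxy := hf.lt_iff_lt.1 (by simpa using hxy)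

theorem continuous_of_mem_strictMonoPerms {α : Type*} [LinearOrder α] [TopologicalSpace α]
    [OrderTopology α] [DenselyOrdered α] {f : Equiv.Perm α} (hf : f ∈ strictMonoPerms α) :
    Continuous f :=
  hf.monotone.continuous_of_surjective f.surjective

theorem Monotone.Ioo_subset_Ioo_of_fixed {α : Type*} [LinearOrder α] [DenselyOrdered α]
    {g : α → α} (hg : Monotone g) {a c p q : α}
    (ha : g a = a) (hc : g c = c) (hpq : p < q) (hsub : Ioo p q ⊆ Ioo a c) :
    Ioo (g p) (g q) ⊆ Ioo a c := by
  obtain ⟨hap, hqc⟩ := (Ioo_subset_Ioo_iff hpq).1 hsub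
  exact Ioo_subset_Ioo (ha ▸ hg hap) (hc ▸ hg hqc)

theorem exists_isOrbital_mem_of_fixed {f : Equiv.Perm ℝ} (hc : Continuous f) {p q x : ℝ}
    (hp : f p = p) (hpx : p ≤ x) (hq : f q = q) (hxq : x ≤ q) (hx : f x ≠ x) :
    ∃ P Q, IsOrbital f P Q ∧ x ∈ Ioo P Q := by
  have hclosed : IsClosed {t | f t = t} := isClosed_eq hc continuous_id
  set L := {t | f t = t} ∩ Iic x
  set R := {t | f t = t} ∩ Ici x
  have hL : BddAbove L := ⟨x, fun t ht => ht.2⟩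
  have hR : BddBelow R := ⟨x, fun t ht => ht.2⟩
  have hPL : sSup L ∈ L := (hclosed.inter isClosed_Iic).csSup_mem ⟨p, hp, hpx⟩ hL
  have hQR : sInf R ∈ R := (hclosed.inter isClosed_Ici).csInf_mem ⟨q, hq, hxq⟩ hR
  have hPx : sSup L < x := lt_of_le_of_ne hPL.2 fun he => hx (he ▸ hPL.1)
  have hxQ : x < sInf R := lt_of_le_of_ne hQR.2 fun he => hx (he ▸ hQR.1)
  refine ⟨sSup L, sInf R, ⟨hPx.trans hxQ, fun t ht hft => ?_, hPL.1, hQR.1⟩, hPx, hxQ⟩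
  rcases le_total t x with htx | hxt
  · exact (le_csSup hL ⟨hft, htx⟩).not_gt ht.1
  · exact (csInf_le hR ⟨hft, hxt⟩).not_gt ht.2

namespace IsOrbital

variable {f g : Equiv.Perm ℝ} {p q x : ℝ}

theorem lt (h : IsOrbital f p q) : p < q := h.1

theorem apply_ne (h : IsOrbital f p q) (hx : x ∈ Ioo p q) : f x ≠ x := h.2.1 hx

theorem apply_left (h : IsOrbital f p q) : f p = p := h.2.2.1

theorem apply_right (h : IsOrbital f p q) : f q = q := h.2.2.2

theorem conj_s14 (hg : g ∈ strictMonoPerms ℝ) (h : IsOrbital f p q) :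
    IsOrbital (g * f * g⁻¹) (g p) (g q) := by
  obtain ⟨hpq, hsupp, hp, hq⟩ := h
  refine ⟨hg hpq, fun t ht hfix => ?_, by simp [hp], by simp [hq]⟩
  have hinv : StrictMono ⇑g⁻¹ := (strictMonoPerms ℝ).inv_mem hg
  refine hsupp (a := g⁻¹ t) ⟨?_, ?_⟩ (g.injective ?_)
  · simpa using hinv ht.1
  · simpa using hinv ht.2
  · simpa using hfix

theorem inv (h : IsOrbital f p q) : IsOrbital f⁻¹ p q := by
  obtain ⟨hpq, hsupp, hp, hq⟩ := h
  refine ⟨hpq, fun t ht hfix => hsupp ht ?_, ?_, ?_⟩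
  · rw [Equiv.Perm.inv_eq_iff_eq] at hfix; exact hfix.symm
  · rw [Equiv.Perm.inv_eq_iff_eq, hp]
  · rw [Equiv.Perm.inv_eq_iff_eq, hq]

theorem eq_of_mem {p' q' : ℝ} (h : IsOrbital f p q) (h' : IsOrbital f p' q')
    (hx : x ∈ Ioo p q) (hx' : x ∈ Ioo p' q') : p = p' ∧ q = q' := by
  refine ⟨le_antisymm ?_ ?_, le_antisymm ?_ ?_⟩
  · exact not_lt.1 fun hlt => h'.apply_ne ⟨hlt, hx.1.trans hx'.2⟩ h.apply_left
  · exact not_lt.1 fun hlt => h.apply_ne ⟨hlt, hx'.1.trans hx.2⟩ h'.apply_left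
  · exact not_lt.1 fun hlt => h.apply_ne ⟨hx.1.trans hx'.2, hlt⟩ h'.apply_right
  · exact not_lt.1 fun hlt => h'.apply_ne ⟨hx'.1.trans hx.2, hlt⟩ h.apply_right

theorem forall_apply_lt (hc : Continuous f) (h : IsOrbital f p q) (hx : x ∈ Ioo p q)
    (hfx : f x < x) : ∀ y ∈ Ioo p q, f y < y := by
  intro y hy
  refine lt_of_le_of_ne (not_lt.1 fun hlt => ?_) (h.apply_ne hy)
  obtain ⟨t, ht, ht0⟩ := isPreconnected_Ioo.intermediate_value hx hy
    (hc.sub continuous_id).continuousOn ⟨(sub_neg.2 hfx).le, (sub_pos.2 hlt).le⟩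
  exact h.apply_ne ht (sub_eq_zero.1 ht0)

theorem frequently_nhdsGT {P : ℝ → Prop} (hf : f ∈ strictMonoPerms ℝ) (h : IsOrbital f p q)
    (hP : ∀ t, P (f t) ↔ P t) (hx : x ∈ Ioo p q) (hPx : P x) : ∃ᶠ t in 𝓝[>] p, P t := by
  wlog hdown : f x < x generalizing f
  · have hinv : StrictMono ⇑f⁻¹ := (strictMonoPerms ℝ).inv_mem hf
    refine this hinv h.inv (fun t => by simpa using (hP (f⁻¹ t)).symm) ?_
    simpa using hinv (lt_of_le_of_ne (not_lt.1 hdown) (h.apply_ne hx).symm)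
  have hc := continuous_of_mem_strictMonoPerms hf
  have hlim := tendsto_iterate_nhdsGT hf hc h.apply_left (h.forall_apply_lt hc hx hdown) hx
  refine hlim.frequently (Frequently.of_forall fun k => ?_)
  induction k with
  | zero => exact hPx
  | succ k ih => rwa [Function.iterate_succ_apply', hP]

theorem apply_eq_of_commute_of_le {h z : Equiv.Perm ℝ} {a c : ℝ}
    (hz : z ∈ strictMonoPerms ℝ) (hcomm : Commute z h) (ha : z a = a) (hc : z c = c)
    (horb : IsOrbital h p q) (hsub : Ioo p q ⊆ Ioo a c)
    (hmin : ∀ p' q', IsOrbital h p' q' → Ioo p' q' ⊆ Ioo a c → p ≤ p') : z p = p := by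
  have hle : ∀ g ∈ strictMonoPerms ℝ, Commute g h → g a = a → g c = c → p ≤ g p := by
    intro g hg hgh hga hgc
    have horb' := horb.conj_s14 hg
    rw [hgh.eq, mul_inv_cancel_right] at horb'
    exact hmin _ _ horb' (hg.monotone.Ioo_subset_Ioo_of_fixed hga hgc horb.lt hsub)
  have hinv := hle z⁻¹ (inv_mem hz) hcomm.inv_left (Function.IsFixedPt.perm_inv ha)
    (Function.IsFixedPt.perm_inv hc)
  exact le_antisymm (by simpa using hz.monotone hinv) (hle z hz hcomm ha hc)

end IsOrbital

def IsPiecewiseAffine (f : ℝ → ℝ) : Prop :=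
  ∃ B : Finset ℝ, ∀ x ∉ B, ∃ s t : ℝ, ∀ᶠ y in 𝓝 x, f y = s * y + t

theorem isPiecewiseAffine_id : IsPiecewiseAffine id :=
  ⟨∅, fun _ _ => ⟨1, 0, Eventually.of_forall fun y => by simp⟩⟩

namespace IsPiecewiseAffine

variable {f g : ℝ → ℝ}

theorem sub (hf : IsPiecewiseAffine f) (hg : IsPiecewiseAffine g) :
    IsPiecewiseAffine fun x => f x - g x := by
  obtain ⟨B, hB⟩ := hf
  obtain ⟨C, hC⟩ := hg
  refine ⟨B ∪ C, fun x hx => ?_⟩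
  rw [Finset.mem_union, not_or] at hx
  obtain ⟨s, t, hst⟩ := hB x hx.1
  obtain ⟨s', t', hst'⟩ := hC x hx.2
  exact ⟨s - s', t - t', (hst.and hst').mono fun y ⟨h, h'⟩ => by simp only [h, h']; ring⟩

/-- On an interval `(z, u)` free of breakpoints `f` is analytic, so by the identity theorem it
agrees there with any one of its local affine pieces. -/
theorem exists_eventuallyEq_nhdsGT (hf : IsPiecewiseAffine f) (z : ℝ) :
    ∃ s t : ℝ, f =ᶠ[𝓝[>] z] fun y => s * y + t := by
  obtain ⟨B, hB⟩ := hf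
  have hB' : ∀ᶠ x in 𝓝[>] z, x ∉ B := by
    filter_upwards [self_mem_nhdsWithin,
      nhdsWithin_le_nhds ((B.erase z).isClosed.isOpen_compl.mem_nhds (by simp))] with x hx hxB
    exact fun hmem => (mem_Ioi.1 hx).ne' (by simpa [hmem] using hxB)
  obtain ⟨u, hzu, hu⟩ := mem_nhdsGT_iff_exists_Ioo_subset.1 hB'
  have hzu : z < u := hzu
  have haff : ∀ s t : ℝ, AnalyticOnNhd ℝ (fun y => s * y + t) (Ioo z u) := fun s t y _ => by
    fun_prop
  have hanalytic : AnalyticOnNhd ℝ f (Ioo z u) := fun y hy => by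
    obtain ⟨s, t, hst⟩ := hB y (hu hy)
    exact (haff s t y hy).congr (hst.mono fun _ h => h.symm)
  have hm : (z + u) / 2 ∈ Ioo z u := ⟨by linarith, by linarith⟩
  obtain ⟨s, t, hst⟩ := hB _ (hu hm)
  have heq := hanalytic.eqOn_of_preconnected_of_eventuallyEq (haff s t) isPreconnected_Ioo hm hst
  exact ⟨s, t, mem_of_superset (Ioo_mem_nhdsGT hzu) heq⟩

theorem eventually_eq_zero_or_ne_zero (hf : IsPiecewiseAffine f) (z : ℝ) :
    (∀ᶠ x in 𝓝[>] z, f x = 0) ∨ ∀ᶠ x in 𝓝[>] z, f x ≠ 0 := by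
  obtain ⟨s, t, hst⟩ := hf.exists_eventuallyEq_nhdsGT z
  have han : AnalyticAt ℝ (fun y => s * y + t) z := by fun_prop
  rcases han.eventually_eq_zero_or_eventually_ne_zero with h | h
  · left
    filter_upwards [hst, h.filter_mono nhdsWithin_le_nhds] with x h₁ h₂ using h₁.trans h₂
  · right
    filter_upwards [hst, h.filter_mono (nhdsGT_le_nhdsNE z)] with x h₁ h₂ using h₁ ▸ h₂

end IsPiecewiseAffine

/-- Iterating `v` pushes a point where `f = g` and a point where `f ≠ g` towards `p`, which the
piecewise affine `f - g` does not allow. -/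
theorem IsOrbital.eqOn_of_commute {f g v : Equiv.Perm ℝ} {p q x : ℝ} (hf : IsPiecewiseAffine f)
    (hg : IsPiecewiseAffine g) (hv : v ∈ strictMonoPerms ℝ) (hcomm : Commute (g⁻¹ * f) v)
    (horb : IsOrbital v p q) (hx : x ∈ Ioo p q) (hfx : f x = g x) : EqOn f g (Ioo p q) := by
  have hfix : ∀ t, f t = g t ↔ (g⁻¹ * f) t = t := fun t => by
    rw [Equiv.Perm.mul_apply, Equiv.Perm.inv_eq_iff_eq]
  have hP : ∀ t, f (v t) = g (v t) ↔ f t = g t := fun t => by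
    rw [hfix, hfix, ← Equiv.Perm.mul_apply, hcomm.eq, Equiv.Perm.mul_apply, v.injective.eq_iff]
  intro x' hx'
  by_contra hne
  rcases (hf.sub hg).eventually_eq_zero_or_ne_zero p with h | h
  · obtain ⟨t, ht, ht₀⟩ := ((horb.frequently_nhdsGT (P := fun t => f t ≠ g t) hv
      (fun t => not_congr (hP t)) hx' hne).and_eventually h).exists
    exact ht (sub_eq_zero.1 ht₀)
  · obtain ⟨t, ht, ht₀⟩ := ((horb.frequently_nhdsGT (P := fun t => f t = g t) hv hP hx
      hfx).and_eventually h).exists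
    exact ht₀ (sub_eq_zero.2 ht)

namespace IsPL0

variable {f : Equiv.Perm ℝ}

theorem mem_strictMonoPerms (hf : IsPL0 f) : f ∈ strictMonoPerms ℝ :=
  hf.1

theorem isPiecewiseAffine (hf : IsPL0 f) : IsPiecewiseAffine f :=
  hf.2.2.2

theorem exists_isOrbital_mem (hf : IsPL0 f) {x : ℝ} (hx : f x ≠ x) :
    ∃ P Q, IsOrbital f P Q ∧ x ∈ Ioo P Q :=
  exists_isOrbital_mem_of_fixed (continuous_of_mem_strictMonoPerms hf.mem_strictMonoPerms)
    (hf.2.1 _ (min_le_right x 0)) (min_le_left x 0) (hf.2.2.1 _ (le_max_right x 1))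
    (le_max_left x 1) hx

theorem exists_isOrbital_of_frequently_ne (hf : IsPL0 f) {z : ℝ}
    (h : ∃ᶠ x in 𝓝[>] z, f x ≠ x) : ∃ P Q, IsOrbital f P Q ∧ P ≤ z ∧ z < Q := by
  rcases (hf.isPiecewiseAffine.sub isPiecewiseAffine_id).eventually_eq_zero_or_ne_zero z
    with h₀ | h₀
  · obtain ⟨x, hx, hx₀⟩ := (h.and_eventually h₀).exists
    exact absurd (sub_eq_zero.1 hx₀) hx
  obtain ⟨u, hzu, hu⟩ := mem_nhdsGT_iff_exists_Ioo_subset.1 h₀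
  have hzu : z < u := hzu
  have hm : (z + u) / 2 ∈ Ioo z u := ⟨by linarith, by linarith⟩
  obtain ⟨P, Q, horb, hP, hQ⟩ := hf.exists_isOrbital_mem fun h => hu hm (sub_eq_zero.2 h)
  refine ⟨P, Q, horb, not_lt.1 fun hzP => hu ⟨hzP, hP.trans hm.2⟩ ?_, hm.1.trans hQ⟩
  exact sub_eq_zero.2 horb.apply_left

end IsPL0

section ThompsonX

variable {G : Type*} [Group G] {f₀ f₁ : G}

/-- The conjugate `f₁^{f₀ᵏ}` in the paper's notation, i.e. the generator `x_{k+1}` of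
Thompson's group `F` when `f₀, f₁` play the roles of `x₀, x₁`. -/
def thompsonX (f₀ f₁ : G) (k : ℕ) : G := f₀ ^ k * f₁ * (f₀ ^ k)⁻¹

theorem thompsonX_mem {S : Subgroup G} (h₀ : f₀ ∈ S) (h₁ : f₁ ∈ S) (k : ℕ) :
    thompsonX f₀ f₁ k ∈ S :=
  S.mul_mem (S.mul_mem (S.pow_mem h₀ k) h₁) (S.inv_mem (S.pow_mem h₀ k))

theorem thompsonX_one : thompsonX f₀ f₁ 1 = f₀ * f₁ * f₀⁻¹ := by
  simp only [thompsonX, pow_one]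

theorem thompsonX_succ (k : ℕ) :
    thompsonX f₀ f₁ (k + 1) = f₀ * thompsonX f₀ f₁ k * f₀⁻¹ := by
  simp only [thompsonX, pow_succ', mul_inv_rev, mul_assoc]

theorem conj_thompsonX_of_commute {k : ℕ} (h : Commute (f₁⁻¹ * f₀) (thompsonX f₀ f₁ k)) :
    f₁ * thompsonX f₀ f₁ k * f₁⁻¹ = thompsonX f₀ f₁ (k + 1) := by
  rw [thompsonX_succ]
  calc f₁ * thompsonX f₀ f₁ k * f₁⁻¹
      = f₁ * ((f₁⁻¹ * f₀) * thompsonX f₀ f₁ k * (f₁⁻¹ * f₀)⁻¹) * f₁⁻¹ := by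
        rw [h.eq, mul_inv_cancel_right]
    _ = f₀ * thompsonX f₀ f₁ k * f₀⁻¹ := by group

theorem commute_thompsonX (h₁ : Commute (f₁⁻¹ * f₀) (thompsonX f₀ f₁ 1))
    (h₂ : Commute (f₁⁻¹ * f₀) (thompsonX f₀ f₁ 2)) (k : ℕ) :
    Commute (f₁⁻¹ * f₀) (thompsonX f₀ f₁ (k + 1)) := by
  suffices ∀ k, Commute (f₁⁻¹ * f₀) (thompsonX f₀ f₁ (k + 1)) ∧
      Commute (f₁⁻¹ * f₀) (thompsonX f₀ f₁ (k + 2)) from (this k).1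
  intro k
  induction k with
  | zero => exact ⟨h₁, h₂⟩
  | succ k ih =>
    refine ⟨ih.2, ?_⟩
    have hconj : thompsonX f₀ f₁ 1 * thompsonX f₀ f₁ (k + 2) * (thompsonX f₀ f₁ 1)⁻¹ =
        thompsonX f₀ f₁ (k + 3) := by
      calc _ = f₀ * (f₁ * thompsonX f₀ f₁ (k + 1) * f₁⁻¹) * f₀⁻¹ := by
            rw [thompsonX_one, thompsonX_succ (k + 1)]; group
        _ = thompsonX f₀ f₁ (k + 3) := by rw [conj_thompsonX_of_commute ih.1, ← thompsonX_succ]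
    rw [← hconj]
    exact (h₁.mul_right ih.2).mul_right h₁.inv_right

end ThompsonX

namespace ThompsonRel

variable {f₀ f₁ : Equiv.Perm ℝ}

theorem commute (hrel : ThompsonRel f₀ f₁) (k : ℕ) :
    Commute (f₁⁻¹ * f₀) (thompsonX f₀ f₁ (k + 1)) :=
  commute_thompsonX (by rw [thompsonX_one]; exact commutatorElement_eq_one_iff_commute.1 hrel.1)
    (commutatorElement_eq_one_iff_commute.1 hrel.2) k

theorem conj_thompsonX (hrel : ThompsonRel f₀ f₁) (k : ℕ) :
    f₁ * thompsonX f₀ f₁ (k + 1) * f₁⁻¹ = thompsonX f₀ f₁ (k + 2) :=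
  conj_thompsonX_of_commute (hrel.commute k)

/-- `(f₀² π, f₀² κ)` and `(f₁ f₀ π, f₁ f₀ κ)` are overlapping orbitals of `X 2`, so `f₀ = f₁` at
`f₀ κ`; by rigidity also at `κ`, where however `f₁ κ = κ < f₀ κ`. -/
theorem not_isOrbital (hrel : ThompsonRel f₀ f₁) (h₀ : IsPL0 f₀) (h₁ : IsPL0 f₁) {a π κ : ℝ}
    (ha : f₀ a = a) (horb : IsOrbital f₁ π κ) (hπ : π ≤ a) (haκ : a < κ) (hκ : κ < f₀ κ) :
    False := by
  have sm₀ := h₀.mem_strictMonoPerms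
  have sm₁ := h₁.mem_strictMonoPerms
  have hX₁ : IsOrbital (thompsonX f₀ f₁ 1) (f₀ π) (f₀ κ) := by
    rw [thompsonX_one]; exact horb.conj_s14 sm₀
  have hX₂ : IsOrbital (thompsonX f₀ f₁ 2) (f₀ (f₀ π)) (f₀ (f₀ κ)) := horb.conj_s14 (pow_mem sm₀ 2)
  have hX₂' : IsOrbital (thompsonX f₀ f₁ 2) (f₁ (f₀ π)) (f₁ (f₀ κ)) := by
    rw [← hrel.conj_thompsonX 0]; exact hX₁.conj_s14 sm₁
  have hπ₁ : f₀ π ≤ a := ha ▸ sm₀.monotone hπ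
  have hπ₂ : f₀ (f₀ π) ≤ a := ha ▸ sm₀.monotone hπ₁
  have hκ₂ : f₀ κ < f₀ (f₀ κ) := sm₀ hκ
  have hκ₁ : κ < f₁ (f₀ κ) := horb.apply_right.symm.trans_lt (sm₁ hκ)
  obtain ⟨ρ, hρ, hρκ⟩ := exists_between (max_lt haκ ((sm₁ haκ).trans_eq horb.apply_right))
  rw [max_lt_iff] at hρ
  have hfix : f₀ (f₀ κ) = f₁ (f₀ κ) :=
    (hX₂.eq_of_mem hX₂' ⟨hπ₂.trans_lt hρ.1, hρκ.trans (hκ.trans hκ₂)⟩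
      ⟨(sm₁.monotone hπ₁).trans_lt hρ.2, hρκ.trans hκ₁⟩).2
  have heqOn := hX₂.eqOn_of_commute h₀.isPiecewiseAffine h₁.isPiecewiseAffine
    (thompsonX_mem sm₀ sm₁ 2) (hrel.commute 1) ⟨hπ₂.trans_lt (haκ.trans hκ), hκ₂⟩ hfix
  exact hκ.ne' ((heqOn ⟨hπ₂.trans_lt haκ, hκ.trans hκ₂⟩).trans horb.apply_right)

theorem eventually_apply_eq_nhdsGT (hrel : ThompsonRel f₀ f₁) (h₀ : IsPL0 f₀) (h₁ : IsPL0 f₁)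
    {a c e : ℝ} (ha : f₀ a = a) (hup : ∀ x ∈ Ioo a c, x < f₀ x) (he : e ∈ Ioo a c)
    (hfe : f₁ e = e) : ∀ᶠ x in 𝓝[>] a, f₁ x = x := by
  by_contra h
  obtain ⟨P, Q, horb, hP, hQ⟩ := h₁.exists_isOrbital_of_frequently_ne (not_eventually.1 h)
  have hQe : Q ≤ e := not_lt.1 fun hlt => horb.apply_ne ⟨hP.trans_lt he.1, hlt⟩ hfe
  exact hrel.not_isOrbital h₀ h₁ ha horb hP hQ (hup Q ⟨hQ, hQe.trans_lt he.2⟩)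

theorem thompsonX_apply_ne (hrel : ThompsonRel f₀ f₁) {c : ℝ} (hc₀ : f₀ c = c) (hc₁ : f₁ c ≠ c)
    (k : ℕ) : thompsonX f₀ f₁ (k + 2) (f₁ c) ≠ f₁ c ∧
      thompsonX f₀ f₁ (k + 2) (f₁⁻¹ c) ≠ f₁⁻¹ c := by
  have hX : ∀ m, thompsonX f₀ f₁ m c ≠ c := fun m h => by
    have hm : (f₀ ^ m) c = c := Function.IsFixedPt.perm_pow hc₀ m
    rw [thompsonX, Equiv.Perm.mul_apply, Equiv.Perm.mul_apply,
      Function.IsFixedPt.perm_inv hm] at h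
    exact hc₁ ((f₀ ^ m).injective (h.trans hm.symm))
  constructor
  · rw [← hrel.conj_thompsonX k]
    simpa using hX (k + 1)
  · rw [show thompsonX f₀ f₁ (k + 2) = f₁⁻¹ * thompsonX f₀ f₁ (k + 3) * f₁ by
      rw [← hrel.conj_thompsonX (k + 1)]; group]
    simpa using hX (k + 3)

/-- If `f₁` moved `c`, then `f₁` would move the points `f₀⁻ᵏ w` for a suitable `w ∈ (a,c)`, and
these tend to `a` from the right. -/
theorem apply_right_eq (hrel : ThompsonRel f₀ f₁) (h₀ : IsPL0 f₀) (h₁ : IsPL0 f₁) {a c e : ℝ}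
    (horb₀ : IsOrbital f₀ a c) (hup : ∀ x ∈ Ioo a c, x < f₀ x)
    (hev : ∀ᶠ x in 𝓝[>] a, f₁ x = x) (he : e ∈ Ioo a c) (hfe : f₁ e = e) : f₁ c = c := by
  by_contra hc
  have sm₁ := h₁.mem_strictMonoPerms
  obtain ⟨w, hw, hmove⟩ : ∃ w ∈ Ioo a c, ∀ k, thompsonX f₀ f₁ (k + 2) w ≠ w := by
    have hX := hrel.thompsonX_apply_ne horb₀.apply_right hc
    rcases lt_or_gt_of_ne hc with hlt | hgt
    · exact ⟨f₁ c, ⟨he.1.trans_le (hfe ▸ sm₁.monotone he.2.le), hlt⟩, fun k => (hX k).1⟩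
    · have sm₁' : StrictMono ⇑f₁⁻¹ := inv_mem sm₁
      refine ⟨f₁⁻¹ c, ⟨he.1.trans_le ?_, by simpa using sm₁' hgt⟩, fun k => (hX k).2⟩
      exact (Function.IsFixedPt.perm_inv hfe).symm.trans_le (sm₁'.monotone he.2.le)
  have sm₀' : f₀⁻¹ ∈ strictMonoPerms ℝ := inv_mem h₀.mem_strictMonoPerms
  have hdown : ∀ x ∈ Ioo a c, f₀⁻¹ x < x := fun x hx => by
    simpa using (sm₀' : StrictMono ⇑f₀⁻¹) (hup x hx)
  have hlim := tendsto_iterate_nhdsGT sm₀' (continuous_of_mem_strictMonoPerms sm₀')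
    (Function.IsFixedPt.perm_inv horb₀.apply_left) hdown hw
  have hmoved : ∀ k, f₁ ((f₀⁻¹ ^ (k + 2)) w) ≠ (f₀⁻¹ ^ (k + 2)) w := fun k hfix => hmove k <| by
    rw [thompsonX, Equiv.Perm.mul_apply, Equiv.Perm.mul_apply, ← inv_pow, hfix, inv_pow]
    simp
  have hfreq : ∃ᶠ x in 𝓝[>] a, f₁ x ≠ x :=
    (hlim.comp (tendsto_add_atTop_nat 2)).frequently (Frequently.of_forall hmoved)
  obtain ⟨x, hx, hfx⟩ := (hfreq.and_eventually hev).exists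
  exact hx hfx

theorem apply_pow_succ_eq (hrel : ThompsonRel f₀ f₁) (h₀ : f₀ ∈ strictMonoPerms ℝ)
    (h₁ : f₁ ∈ strictMonoPerms ℝ) {a c p q : ℝ} (ha₀ : f₀ a = a) (hc₀ : f₀ c = c)
    (ha₁ : f₁ a = a) (hc₁ : f₁ c = c) (horb : IsOrbital f₁ p q) (hsub : Ioo p q ⊆ Ioo a c)
    (hmin : ∀ p' q', IsOrbital f₁ p' q' → Ioo p' q' ⊆ Ioo a c → p ≤ p') (k : ℕ) :
    f₁ ((f₀ ^ (k + 1)) p) = (f₀ ^ (k + 2)) p := by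
  set g := f₀ ^ (k + 1)
  have hg : g ∈ strictMonoPerms ℝ := pow_mem h₀ _
  have hga : g a = a := Function.IsFixedPt.perm_pow ha₀ _
  have hgc : g c = c := Function.IsFixedPt.perm_pow hc₀ _
  have hX : IsOrbital (thompsonX f₀ f₁ (k + 1)) (g p) (g q) := horb.conj_s14 hg
  have hXmin : ∀ p' q', IsOrbital (thompsonX f₀ f₁ (k + 1)) p' q' → Ioo p' q' ⊆ Ioo a c →
      g p ≤ p' := by
    intro p' q' h hs
    have h' := h.conj_s14 (inv_mem hg)
    rw [show g⁻¹ * thompsonX f₀ f₁ (k + 1) * g⁻¹⁻¹ = f₁ by simp [g, thompsonX, mul_assoc]] at h'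
    have hle := hmin _ _ h' ((inv_mem hg : StrictMono ⇑g⁻¹).monotone.Ioo_subset_Ioo_of_fixed
      (Function.IsFixedPt.perm_inv hga) (Function.IsFixedPt.perm_inv hgc) h.lt hs)
    simpa using hg.monotone hle
  have hfix := hX.apply_eq_of_commute_of_le (mul_mem (inv_mem h₁) h₀) (hrel.commute k)
    (by rw [Equiv.Perm.mul_apply, ha₀, Function.IsFixedPt.perm_inv ha₁])
    (by rw [Equiv.Perm.mul_apply, hc₀, Function.IsFixedPt.perm_inv hc₁])
    (hg.monotone.Ioo_subset_Ioo_of_fixed hga hgc horb.lt hsub) hXmin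
  rw [Equiv.Perm.mul_apply, Equiv.Perm.inv_eq_iff_eq] at hfix
  rw [← hfix, pow_succ' f₀ (k + 1), Equiv.Perm.mul_apply]

end ThompsonRel

theorem lt_apply_of_apply_pow_succ_eq {f₀ f₁ : Equiv.Perm ℝ} (h₀ : f₀ ∈ strictMonoPerms ℝ)
    (h₁ : Monotone f₁) {a c x e : ℝ} (horb₀ : IsOrbital f₀ a c)
    (hup : ∀ y ∈ Ioo a c, y < f₀ y) (hx : x ∈ Ioo a c)
    (hshift : ∀ k, f₁ ((f₀ ^ (k + 1)) x) = (f₀ ^ (k + 2)) x) (hec : e < c) (hfe : f₁ e = e) :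
    e < f₀ x := by
  by_contra! hle
  have hbound : ∀ k, (f₀ ^ (k + 1)) x ≤ e := by
    intro k
    induction k with
    | zero => simpa using hle
    | succ k ih => rw [← hshift, ← hfe]; exact h₁ ih
  have hlim := tendsto_iterate_nhdsLT h₀ (continuous_of_mem_strictMonoPerms h₀) horb₀.apply_right hup hx
  obtain ⟨k, hk⟩ := ((hlim.comp (tendsto_add_atTop_nat 1)).eventually
    (Ioo_mem_nhdsLT hec)).exists
  exact (hbound k).not_gt hk.1

/-- Suppose `f₀, f₁ ∈ PL₀(I)` satisfy the two standard relations of Thompson's group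
`F`, `(a,c)` is an orbital of `f₀` on which `f₀ x > x` (an up-bump) which is not an
orbital of `f₁`, and `(b 0, d 0) < … < (b n, d n)` is the (complete, increasing)
list of orbitals of `f₁` contained in `(a,c)`.  Then `f₀(b 0) > b n`, i.e. `f₀`
moves the left endpoint of the first orbital of `f₁` beyond the left endpoint of the
last one. -/
theorem f0_of_first_exceeds_last (f₀ f₁ : Equiv.Perm ℝ)
    (h₀ : IsPL0 f₀) (h₁ : IsPL0 f₁) (hrel : ThompsonRel f₀ f₁) (a c : ℝ)
    (horb₀ : IsOrbital f₀ a c) (hup : ∀ x ∈ Set.Ioo a c, x < f₀ x)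
    (hne : ¬ IsOrbital f₁ a c) (n : ℕ) (b d : Fin (n + 1) → ℝ)
    (horbs : ∀ i, IsOrbital f₁ (b i) (d i) ∧ Set.Ioo (b i) (d i) ⊆ Set.Ioo a c)
    (hmono : StrictMono b)
    (hall : ∀ b' d' : ℝ, IsOrbital f₁ b' d' → Set.Ioo b' d' ⊆ Set.Ioo a c →
      ∃ i, b' = b i ∧ d' = d i) :
    b (Fin.last n) < f₀ (b 0) := by
  have hbd : ∀ i, a ≤ b i ∧ d i ≤ c := fun i => (Ioo_subset_Ioo_iff (horbs i).1.lt).1 (horbs i).2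
  have hb₀ : a < b 0 := by
    refine (hbd 0).1.lt_of_ne fun hab => ?_
    have horb : IsOrbital f₁ a (d 0) := hab ▸ (horbs 0).1
    have hdc : d 0 < c := (hbd 0).2.lt_of_ne fun hdc => hne (hdc ▸ horb)
    exact hrel.not_isOrbital h₀ h₁ horb₀.apply_left horb le_rfl horb.lt (hup _ ⟨horb.1, hdc⟩)
  have hb0 : b 0 ∈ Ioo a c := ⟨hb₀, (horbs 0).1.lt.trans_le (hbd 0).2⟩
  have hfix₀ : f₁ (b 0) = b 0 := (horbs 0).1.apply_left
  have hev := hrel.eventually_apply_eq_nhdsGT h₀ h₁ horb₀.apply_left hup hb0 hfix₀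
  have hfa : f₁ a = a :=
    (isClosed_eq (continuous_of_mem_strictMonoPerms h₁.mem_strictMonoPerms) continuous_id).mem_of_tendsto
      (tendsto_id.mono_left nhdsWithin_le_nhds) hev
  have hfc : f₁ c = c := hrel.apply_right_eq h₀ h₁ horb₀ hup hev hb0 hfix₀
  have hshift := hrel.apply_pow_succ_eq h₀.mem_strictMonoPerms h₁.mem_strictMonoPerms horb₀.apply_left horb₀.apply_right hfa hfc (horbs 0).1
    (horbs 0).2 fun p q h hs => by
      obtain ⟨i, rfl, -⟩ := hall p q h hs
      exact hmono.monotone (Fin.zero_le i)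
  exact lt_apply_of_apply_pow_succ_eq h₀.mem_strictMonoPerms h₁.mem_strictMonoPerms.monotone horb₀ hup hb0 hshift
    ((horbs _).1.lt.trans_le (hbd _).2) (horbs _).1.apply_left
end
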